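/- Let H be a good homogeneous relation on X, x ∈ X, MaxM(x) = {M₁,…,M_k} the partition of X∖{x} into maximal homogeneous modules not containing x, and H(x) the quotient relation obtained by restricting H to {x, e₁,…,e_k} where e_i ∈ M_i are arbitrary representatives. Then every non-trivial homogeneous module of H(x) (one of size at least 2 and not the whole set) contains x. -/

import Mathlib

/-!
If a quotient module `N` avoided `x`, it would consist of representatives only, and the union of
their classes would be a homogeneous module of `H` avoiding `x`: between two classes, the relation
seen from a point `y` outside is the one seen from `x` or, by goodness, from the representative of
the class of `y`, and both are fixed by `N` being a module of the quotient. This union strictly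
contains the class of any of the (at least two) representatives in `N`, against maximality.
-/

/-- `H` is a homogeneous relation: for each `x`, the binary relation
`H x · ·` is an equivalence relation on the elements distinct from `x`. -/
def IsHomRel {X : Type*} (H : X → X → X → Prop) : Prop :=
  (∀ x y, y ≠ x → H x y y) ∧
  (∀ x y z, y ≠ x → z ≠ x → H x y z → H x z y) ∧
  (∀ x y z w, y ≠ x → z ≠ x → w ≠ x → H x y z → H x z w → H x y w)

/-- `M` is a homogeneous module of `H`. -/
def IsModule {X : Type*} (H : X → X → X → Prop) (M : Set X) : Prop :=
  ∀ m ∈ M, ∀ m' ∈ M, ∀ x ∉ M, H x m m'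

/-- Two sets overlap. -/
def Overlap {X : Type*} (A B : Set X) : Prop :=
  (A ∩ B).Nonempty ∧ (A \ B).Nonempty ∧ (B \ A).Nonempty

/-- `H` is good: it satisfies the modular quotient property. -/
def Good {X : Type*} (H : X → X → X → Prop) : Prop :=
  ∀ M : Set X, IsModule H M →
    ∀ x ∈ M, ∀ y ∈ M, ∀ s ∉ M, ∀ t ∉ M, (H x s t ↔ H y s t)

/-- `N` is a homogeneous module of the relation `H` induced on `S`. -/
def IsModuleIn {X : Type*} (H : X → X → X → Prop) (S N : Set X) : Prop :=
  ∀ m ∈ N, ∀ m' ∈ N, ∀ x ∈ S, x ∉ N → H x m m'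


section

open Function

variable {X ι : Type*} {H : X → X → X → Prop} {M : ι → Set X} {e : ι → X}

theorem isModule_biUnion_of_rel_reps (hH : IsHomRel H) (hmod : ∀ i, IsModule H (M i))
    (he : ∀ i, e i ∈ M i) {I : Set ι}
    (hrep : ∀ i ∈ I, ∀ j ∈ I, ∀ y ∉ ⋃ l ∈ I, M l, H y (e i) (e j)) :
    IsModule H (⋃ i ∈ I, M i) := by
  obtain ⟨-, -, htrans⟩ := hH
  intro m hm m' hm' y hy
  simp only [Set.mem_iUnion, exists_prop] at hm hm'
  obtain ⟨i, hi, hmi⟩ := hm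
  obtain ⟨j, hj, hm'j⟩ := hm'
  have hyi : y ∉ M i := fun h => hy (Set.mem_biUnion hi h)
  have hyj : y ∉ M j := fun h => hy (Set.mem_biUnion hj h)
  have ne_y {z : X} {l : ι} (hz : z ∈ M l) (hyl : y ∉ M l) : z ≠ y := by
    rintro rfl; exact hyl hz
  exact htrans y m (e i) m' (ne_y hmi hyi) (ne_y (he i) hyi) (ne_y hm'j hyj)
    (hmod i m hmi (e i) (he i) y hyi)
    (htrans y (e i) (e j) m' (ne_y (he i) hyi) (ne_y (he j) hyj) (ne_y hm'j hyj)
      (hrep i hi j hj y hy) (hmod j (e j) (he j) m' hm'j y hyj))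

theorem Good.rel_reps_iff (hgood : Good H) (hmod : ∀ i, IsModule H (M i))
    (hdisj : Pairwise (Disjoint on M)) (he : ∀ i, e i ∈ M i) {l : ι} {y : X} (hy : y ∈ M l)
    {i j : ι} (hil : i ≠ l) (hjl : j ≠ l) :
    H y (e i) (e j) ↔ H (e l) (e i) (e j) :=
  hgood (M l) (hmod l) y hy (e l) (he l) (e i) ((hdisj hil).notMem_of_mem_left (he i))
    (e j) ((hdisj hjl).notMem_of_mem_left (he j))

theorem rel_reps_of_isModuleIn (hgood : Good H) (hmod : ∀ i, IsModule H (M i))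
    (hdisj : Pairwise (Disjoint on M)) {x : X} (hcover : ⋃ i, M i = {x}ᶜ)
    (he : ∀ i, e i ∈ M i) {N : Set X} (hNmod : IsModuleIn H (insert x (Set.range e)) N)
    (hxN : x ∉ N) :
    ∀ i ∈ {i | e i ∈ N}, ∀ j ∈ {i | e i ∈ N}, ∀ y ∉ ⋃ l ∈ {i | e i ∈ N}, M l,
      H y (e i) (e j) := by
  intro i hi j hj y hy
  by_cases hyx : y = x
  · subst hyx
    exact hNmod (e i) hi (e j) hj y (Set.mem_insert y _) hxN
  obtain ⟨l, hyl⟩ := Set.mem_iUnion.mp (hcover ▸ hyx : y ∈ ⋃ i, M i)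
  have hl : e l ∉ N := fun hl => hy (Set.mem_biUnion hl hyl)
  have ne_l {m : ι} (hm : e m ∈ N) : m ≠ l := by rintro rfl; exact hl hm
  exact (hgood.rel_reps_iff hmod hdisj he hyl (ne_l hi) (ne_l hj)).mpr
    (hNmod (e i) hi (e j) hj (e l) (Set.mem_insert_of_mem x ⟨l, rfl⟩) hl)

end

theorem stmt_19_general {X : Type*} (H : X → X → X → Prop)
    (hH : IsHomRel H) (hgood : Good H) (x : X)
    (k : ℕ) (M : Fin k → Set X)
    (hmod : ∀ i, IsModule H (M i)) (hx : ∀ i, x ∉ M i)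
    (hmax : ∀ i, ∀ N : Set X, IsModule H N → x ∉ N → M i ⊆ N → N = M i)
    (hdisj : ∀ i j, i ≠ j → Disjoint (M i) (M j))
    (hcover : (⋃ i, M i) = ({x}ᶜ : Set X))
    (e : Fin k → X) (he : ∀ i, e i ∈ M i)
    (N : Set X) (hN : N ⊆ insert x (Set.range e))
    (hNmod : IsModuleIn H (insert x (Set.range e)) N)
    (hbig : 1 < N.ncard) :
    x ∈ N := by
  by_contra hxN
  have hdisj' : Pairwise fun i j => Disjoint (M i) (M j) := fun i j => hdisj i j
  set U := ⋃ i ∈ {i | e i ∈ N}, M i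
  have hU : IsModule H U := isModule_biUnion_of_rel_reps hH hmod he
    (rel_reps_of_isModuleIn hgood hmod hdisj' hcover he hNmod hxN)
  have hxU : x ∉ U := by
    simp only [U, Set.mem_iUnion, not_exists]
    exact fun i _ => hx i
  obtain ⟨a, ha, b, hb, hab⟩ := (Set.one_lt_ncard_iff_nontrivial_and_finite.mp hbig).1
  obtain ⟨i, rfl⟩ := (hN ha).resolve_left (fun h => hxN (h ▸ ha))
  obtain ⟨j, rfl⟩ := (hN hb).resolve_left (fun h => hxN (h ▸ hb))
  have hUi : U = M i := hmax i U hU hxU (Set.subset_biUnion_of_mem (u := M) ha)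
  have hejU : e j ∈ U := Set.mem_biUnion hb (he j)
  rw [hUi] at hejU
  exact (hdisj' fun hij : i = j => hab (congrArg e hij)).notMem_of_mem_right (he j) hejU

theorem stmt_19 {X : Type*} [Fintype X] (H : X → X → X → Prop)
    (hH : IsHomRel H) (hgood : Good H) (x : X)
    (k : ℕ) (M : Fin k → Set X)
    (hmod : ∀ i, IsModule H (M i)) (hx : ∀ i, x ∉ M i)
    (hmax : ∀ i, ∀ N : Set X, IsModule H N → x ∉ N → M i ⊆ N → N = M i)
    (hdisj : ∀ i j, i ≠ j → Disjoint (M i) (M j))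
    (hcover : (⋃ i, M i) = ({x}ᶜ : Set X))
    (e : Fin k → X) (he : ∀ i, e i ∈ M i)
    (N : Set X) (hN : N ⊆ insert x (Set.range e))
    (hNmod : IsModuleIn H (insert x (Set.range e)) N)
    (hbig : 1 < N.ncard) (hNS : N ≠ insert x (Set.range e)) :
    x ∈ N :=
  stmt_19_general H hH hgood x k M hmod hx hmax hdisj hcover e he N hN hNmod hbig
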